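/- arXiv:2107.12013 — 3 statements merged into one kernel-verified Lean document; each statement's English description precedes it below -/
import Mathlib

section
/- Fix real numbers a < p < b, constants α ≥ 0 and c ∈ ℝ, and a continuous function f : [a,b] → ℝ. Suppose u : [a,b] → ℝ is continuous on [a,b], continuously differentiable on [a,p] and on [p,b] (with one-sided derivatives u'(p⁻) and u'(p⁺) at p), twice differentiable on (a,p) ∪ (p,b) with u''(x) − α·u(x) = f(x) for all x ∈ (a,p) ∪ (p,b), and satisfies the jump condition u'(p⁺) − u'(p⁻) = c. Then for every continuously differentiable test function v : [a,b] → ℝ with v(a) = v(b) = 0, the weak identity −∫ₐᵇ u'(x)·v'(x) dx − α·∫ₐᵇ u(x)·v(x) dx = ∫ₐᵇ f(x)·v(x) dx + c·v(p) holds, where u' denotes the piecewise derivative. -/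
open Set intervalIntegral

/-!
Integrate by parts on `[a, p]` and on `[p, b]` separately, using `uL'' = uR'' = f + α u`.
The boundary terms at `a` and `b` vanish with `v`, and the two boundary terms at `p` combine
to `(uR' p - uL' p) · v p = c · v p`: the delta source reappears as this jump.
-/

theorem hasDerivAt_of_exists_sub_eq {w : ℝ → ℝ} {x y z : ℝ}
    (h : ∃ w'', HasDerivAt w w'' x ∧ w'' - y = z) : HasDerivAt w (z + y) x := by
  obtain ⟨w'', hw, rfl⟩ := h
  simpa using hw

theorem integral_mul_deriv_eq_of_continuousOn_Icc {s t : ℝ} (hst : s ≤ t) {w w' v v' : ℝ → ℝ}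
    (hw : ContinuousOn w (Icc s t)) (hww' : ∀ x ∈ Ioo s t, HasDerivAt w (w' x) x)
    (hw' : ContinuousOn w' (Icc s t))
    (hv : ContinuousOn v (Icc s t)) (hvv' : ∀ x ∈ Ioo s t, HasDerivAt v (v' x) x)
    (hv' : ContinuousOn v' (Icc s t)) :
    ∫ x in s..t, w x * v' x = w t * v t - w s * v s - ∫ x in s..t, w' x * v x := by
  rw [← uIcc_of_le hst] at hw hw' hv hv'
  exact integral_mul_deriv_eq_deriv_mul_of_hasDerivAt hw hv
    (by rwa [min_eq_left hst, max_eq_right hst]) (by rwa [min_eq_left hst, max_eq_right hst])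
    hw'.intervalIntegrable hv'.intervalIntegrable

theorem weak_formulation_of_delta_source_general
    (a p b : ℝ) (hap : a < p) (hpb : p < b)
    (α c : ℝ)
    (f : ℝ → ℝ) (hf : ContinuousOn f (Icc a b))
    (u uL' uR' : ℝ → ℝ)
    (hu : ContinuousOn u (Icc a b))
    (huL' : ContinuousOn uL' (Icc a p))
    (huR' : ContinuousOn uR' (Icc p b))
    (hodeL : ∀ x ∈ Ioo a p, ∃ u'' : ℝ, HasDerivAt uL' u'' x ∧ u'' - α * u x = f x)
    (hodeR : ∀ x ∈ Ioo p b, ∃ u'' : ℝ, HasDerivAt uR' u'' x ∧ u'' - α * u x = f x)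
    (hjump : uR' p - uL' p = c) :
    ∀ v v' : ℝ → ℝ,
      (∀ x ∈ Icc a b, HasDerivWithinAt v (v' x) (Icc a b) x) →
      ContinuousOn v' (Icc a b) →
      v a = 0 → v b = 0 →
      -((∫ x in a..p, uL' x * v' x) + ∫ x in p..b, uR' x * v' x)
          - α * ∫ x in a..b, u x * v x
        = (∫ x in a..b, f x * v x) + c * v p := by
  intro v v' hv hv' hva hvb
  have hab : a ≤ b := (hap.trans hpb).le
  have ha : a ∈ Icc a b := left_mem_Icc.2 hab
  have hb : b ∈ Icc a b := right_mem_Icc.2 hab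
  have hp : p ∈ Icc a b := ⟨hap.le, hpb.le⟩
  have hvc : ContinuousOn v (Icc a b) := fun x hx ↦ (hv x hx).continuousWithinAt
  have hvv' : ∀ x ∈ Ioo a b, HasDerivAt v (v' x) x := fun x hx ↦
    (hv x (Ioo_subset_Icc_self hx)).hasDerivAt (Icc_mem_nhds hx.1 hx.2)
  have hg : ContinuousOn (fun x ↦ f x + α * u x) (Icc a b) := hf.add (continuousOn_const.mul hu)
  have hint (F : ℝ → ℝ) (hF : ContinuousOn F (Icc a b)) {s t : ℝ} (hs : s ∈ Icc a b)
      (ht : t ∈ Icc a b) : IntervalIntegrable F MeasureTheory.volume s t :=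
    (hF.mono (uIcc_subset_Icc hs ht)).intervalIntegrable
  have ibpL := integral_mul_deriv_eq_of_continuousOn_Icc hap.le huL'
    (fun x hx ↦ hasDerivAt_of_exists_sub_eq (hodeL x hx)) (hg.mono (Icc_subset_Icc_right hpb.le))
    (hvc.mono (Icc_subset_Icc_right hpb.le)) (fun x hx ↦ hvv' x (Ioo_subset_Ioo_right hpb.le hx))
    (hv'.mono (Icc_subset_Icc_right hpb.le))
  have ibpR := integral_mul_deriv_eq_of_continuousOn_Icc hpb.le huR'
    (fun x hx ↦ hasDerivAt_of_exists_sub_eq (hodeR x hx)) (hg.mono (Icc_subset_Icc_left hap.le))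
    (hvc.mono (Icc_subset_Icc_left hap.le)) (fun x hx ↦ hvv' x (Ioo_subset_Ioo_left hap.le hx))
    (hv'.mono (Icc_subset_Icc_left hap.le))
  have hsplit := integral_add_adjacent_intervals
    (hint (fun x ↦ (f x + α * u x) * v x) (hg.mul hvc) ha hp) (hint _ (hg.mul hvc) hp hb)
  have hlin : ∫ x in a..b, (f x + α * u x) * v x
      = (∫ x in a..b, f x * v x) + α * ∫ x in a..b, u x * v x := by
    simp_rw [add_mul, mul_assoc]
    rw [integral_add (hint (fun x ↦ f x * v x) (hf.mul hvc) ha hb)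
      ((hint (fun x ↦ u x * v x) (hu.mul hvc) ha hb).const_mul α), integral_const_mul]
  rw [hva] at ibpL
  rw [hvb] at ibpR
  linear_combination -ibpR - ibpL + hsplit + hlin + v p * hjump

/-- One-dimensional weak formulation: if `u` is continuous on `[a,b]`,
continuously differentiable on `[a,p]` (with derivative `uL'`) and on `[p,b]` (with
derivative `uR'`), twice differentiable on `(a,p) ∪ (p,b)` where `u'' − α·u = f`, and the
normal-derivative jump `u'(p⁺) − u'(p⁻) = c` holds, then for every `C¹` test function `v`
vanishing at `a` and `b`,
`−∫ₐᵇ u'·v' − α·∫ₐᵇ u·v = ∫ₐᵇ f·v + c·v(p)`,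
where the integral of the piecewise derivative `u'` against `v'` splits as
`∫ₐᵖ uL'·v' + ∫ₚᵇ uR'·v'`. -/
theorem weak_formulation_of_delta_source
    (a p b : ℝ) (hap : a < p) (hpb : p < b)
    (α c : ℝ) (hα : 0 ≤ α)
    (f : ℝ → ℝ) (hf : ContinuousOn f (Icc a b))
    (u uL' uR' : ℝ → ℝ)
    (hu : ContinuousOn u (Icc a b))
    (huL : ∀ x ∈ Icc a p, HasDerivWithinAt u (uL' x) (Icc a p) x)
    (huL' : ContinuousOn uL' (Icc a p))
    (huR : ∀ x ∈ Icc p b, HasDerivWithinAt u (uR' x) (Icc p b) x)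
    (huR' : ContinuousOn uR' (Icc p b))
    (hodeL : ∀ x ∈ Ioo a p, ∃ u'' : ℝ, HasDerivAt uL' u'' x ∧ u'' - α * u x = f x)
    (hodeR : ∀ x ∈ Ioo p b, ∃ u'' : ℝ, HasDerivAt uR' u'' x ∧ u'' - α * u x = f x)
    (hjump : uR' p - uL' p = c) :
    ∀ v v' : ℝ → ℝ,
      (∀ x ∈ Icc a b, HasDerivWithinAt v (v' x) (Icc a b) x) →
      ContinuousOn v' (Icc a b) →
      v a = 0 → v b = 0 →
      -((∫ x in a..p, uL' x * v' x) + ∫ x in p..b, uR' x * v' x)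
          - α * ∫ x in a..b, u x * v x
        = (∫ x in a..b, f x * v x) + c * v p :=
  weak_formulation_of_delta_source_general a p b hap hpb α c f hf u uL' uR' hu huL' huR' hodeL hodeR
    hjump
end

section
/- Fix real numbers a < p < b, constants α ≥ 0, c ∈ ℝ, β > 0, boundary data g_a, g_b ∈ ℝ, and a continuous f : [a,b] → ℝ. Let A be the set of continuous functions v : [a,b] → ℝ that are continuously differentiable on [a,p] and on [p,b], and define the penalized energy L̃(v) = (1/2)·∫ₐᵇ v'(x)² dx + (α/2)·∫ₐᵇ v(x)² dx + ∫ₐᵇ f(x)·v(x) dx + c·v(p) + β·[(v(a) − g_a)² + (v(b) − g_b)²], where v' denotes the piecewise derivative. Suppose u ∈ A is twice differentiable on (a,p) ∪ (p,b) with u'' − α·u = f there, satisfies u'(p⁺) − u'(p⁻) = c, and the Robin boundary conditions −u'(a) + 2β·(u(a) − g_a) = 0 and u'(b) + 2β·(u(b) − g_b) = 0. Then u is a global minimizer of L̃ over A: L̃(u) ≤ L̃(v) for every v ∈ A. -/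
open Set intervalIntegral

/-- The admissible class `A`: continuous functions on `[a,b]` that are continuously
differentiable on `[a,p]` (with derivative `vL'`) and on `[p,b]` (with derivative `vR'`). -/
def MemAdmissible (a p b : ℝ) (v vL' vR' : ℝ → ℝ) : Prop :=
  ContinuousOn v (Set.Icc a b) ∧
  (∀ x ∈ Set.Icc a p, HasDerivWithinAt v (vL' x) (Set.Icc a p) x) ∧
  ContinuousOn vL' (Set.Icc a p) ∧
  (∀ x ∈ Set.Icc p b, HasDerivWithinAt v (vR' x) (Set.Icc p b) x) ∧
  ContinuousOn vR' (Set.Icc p b)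

/-- The boundary-penalized energy
`L̃(v) = (1/2)·∫ₐᵇ v′² + (α/2)·∫ₐᵇ v² + ∫ₐᵇ f·v + c·v(p) + β·[(v(a)−g_a)² + (v(b)−g_b)²]`,
where the integral of the squared piecewise derivative splits as `∫ₐᵖ vL′² + ∫ₚᵇ vR′²`. -/
noncomputable def penalizedEnergy (a p b α c β ga gb : ℝ) (f v vL' vR' : ℝ → ℝ) : ℝ :=
  (1 / 2) * ((∫ x in a..p, (vL' x) ^ 2) + ∫ x in p..b, (vR' x) ^ 2)
    + (α / 2) * (∫ x in a..b, (v x) ^ 2)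
    + (∫ x in a..b, f x * v x)
    + c * v p
    + β * ((v a - ga) ^ 2 + (v b - gb) ^ 2)

open MeasureTheory (volume)

/-!
Write `v = u + w`. Since `L̃` is quadratic, `L̃(v) = L̃(u) + δL̃(u)[w] + Q(w)`, where `Q` is `L̃`
with all data `f, c, g_a, g_b` set to zero, a sum of nonnegative terms when `α, β ≥ 0`.
The first variation vanishes: integrating `u'w'` by parts on `[a,p]` and on `[p,b]`, the
equation `u'' - αu = f` cancels the volume terms, the jump of `u'` at `p` cancels `c·w(p)`, and
the Robin conditions cancel the derivatives of the boundary penalty.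
-/

/-- The first variation `δL̃(u)[w]` of `penalizedEnergy` at `u` in the direction `w`. -/
noncomputable def penalizedEnergyVariation (a p b α c β ga gb : ℝ) (f u uL' uR' w wL' wR' : ℝ → ℝ) :
    ℝ :=
  ((∫ x in a..p, uL' x * wL' x) + ∫ x in p..b, uR' x * wR' x)
    + α * (∫ x in a..b, u x * w x)
    + (∫ x in a..b, f x * w x)
    + c * w p
    + 2 * β * ((u a - ga) * w a + (u b - gb) * w b)

theorem MemAdmissible.sub {a p b : ℝ} {u uL' uR' v vL' vR' : ℝ → ℝ} (hv : MemAdmissible a p b v vL' vR')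
    (hu : MemAdmissible a p b u uL' uR') : MemAdmissible a p b (v - u) (vL' - uL') (vR' - uR') :=
  ⟨hv.1.sub hu.1, fun x hx ↦ (hv.2.1 x hx).sub (hu.2.1 x hx), hv.2.2.1.sub hu.2.2.1,
    fun x hx ↦ (hv.2.2.2.1 x hx).sub (hu.2.2.2.1 x hx), hv.2.2.2.2.sub hu.2.2.2.2⟩

theorem integral_sq_sub_integral_sq {a b : ℝ} {F G : ℝ → ℝ} (hab : a ≤ b)
    (hF : ContinuousOn F (Icc a b)) (hG : ContinuousOn G (Icc a b)) :
    (∫ x in a..b, G x ^ 2) - ∫ x in a..b, F x ^ 2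
      = 2 * (∫ x in a..b, F x * (G x - F x)) + ∫ x in a..b, (G x - F x) ^ 2 := by
  have hF2 : IntervalIntegrable (fun x ↦ F x ^ 2) volume a b :=
    (hF.pow 2).intervalIntegrable_of_Icc hab
  have hG2 : IntervalIntegrable (fun x ↦ G x ^ 2) volume a b :=
    (hG.pow 2).intervalIntegrable_of_Icc hab
  have hFGF : IntervalIntegrable (fun x ↦ 2 * (F x * (G x - F x))) volume a b :=
    ((hF.mul (hG.sub hF)).intervalIntegrable_of_Icc hab).const_mul 2
  have hGF2 : IntervalIntegrable (fun x ↦ (G x - F x) ^ 2) volume a b :=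
    ((hG.sub hF).pow 2).intervalIntegrable_of_Icc hab
  rw [← integral_sub hG2 hF2, ← integral_const_mul, ← integral_add hFGF hGF2]
  exact integral_congr fun x _ ↦ by ring

theorem integral_mul_sub_integral_mul {a b : ℝ} {f u v : ℝ → ℝ} (hab : a ≤ b)
    (hf : ContinuousOn f (Icc a b)) (hu : ContinuousOn u (Icc a b))
    (hv : ContinuousOn v (Icc a b)) :
    (∫ x in a..b, f x * v x) - ∫ x in a..b, f x * u x = ∫ x in a..b, f x * (v x - u x) := by
  have hfu : IntervalIntegrable (fun x ↦ f x * u x) volume a b :=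
    (hf.mul hu).intervalIntegrable_of_Icc hab
  have hfv : IntervalIntegrable (fun x ↦ f x * v x) volume a b :=
    (hf.mul hv).intervalIntegrable_of_Icc hab
  rw [← integral_sub hfv hfu]
  exact integral_congr fun x _ ↦ by ring

theorem penalizedEnergy_sub_eq {a p b α c β ga gb : ℝ} {f u uL' uR' v vL' vR' : ℝ → ℝ}
    (hap : a ≤ p) (hpb : p ≤ b) (hf : ContinuousOn f (Icc a b))
    (hu : MemAdmissible a p b u uL' uR') (hv : MemAdmissible a p b v vL' vR') :
    penalizedEnergy a p b α c β ga gb f v vL' vR' - penalizedEnergy a p b α c β ga gb f u uL' uR'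
      = penalizedEnergyVariation a p b α c β ga gb f u uL' uR' (v - u) (vL' - uL') (vR' - uR')
        + penalizedEnergy a p b α 0 β 0 0 0 (v - u) (vL' - uL') (vR' - uR') := by
  have hab := hap.trans hpb
  have hL := integral_sq_sub_integral_sq hap hu.2.2.1 hv.2.2.1
  have hR := integral_sq_sub_integral_sq hpb hu.2.2.2.2 hv.2.2.2.2
  have hM := integral_sq_sub_integral_sq hab hu.1 hv.1
  have hF := integral_mul_sub_integral_mul hab hf hu.1 hv.1
  simp only [penalizedEnergy, penalizedEnergyVariation, Pi.sub_apply, Pi.zero_apply, zero_mul,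
    intervalIntegral.integral_zero]
  linear_combination (1 / 2) * hL + (1 / 2) * hR + (α / 2) * hM + hF

theorem penalizedEnergy_zero_data_nonneg {a p b α β : ℝ} {w wL' wR' : ℝ → ℝ}
    (hap : a ≤ p) (hpb : p ≤ b) (hα : 0 ≤ α) (hβ : 0 ≤ β) :
    0 ≤ penalizedEnergy a p b α 0 β 0 0 0 w wL' wR' := by
  have hL : 0 ≤ ∫ x in a..p, wL' x ^ 2 := integral_nonneg hap fun x _ ↦ sq_nonneg _
  have hR : 0 ≤ ∫ x in p..b, wR' x ^ 2 := integral_nonneg hpb fun x _ ↦ sq_nonneg _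
  have hM : 0 ≤ ∫ x in a..b, w x ^ 2 := integral_nonneg (hap.trans hpb) fun x _ ↦ sq_nonneg _
  have hB : 0 ≤ β * (w a ^ 2 + w b ^ 2) := by positivity
  simp only [penalizedEnergy, Pi.zero_apply, zero_mul, intervalIntegral.integral_zero, sub_zero]
  linarith [mul_nonneg hα hM]

theorem integral_mul_deriv_eq_deriv_mul_of_le {a b : ℝ} {U U' W W' : ℝ → ℝ} (hab : a ≤ b)
    (hU : ContinuousOn U (Icc a b)) (hUU' : ∀ x ∈ Ioo a b, HasDerivAt U (U' x) x)
    (hU' : ContinuousOn U' (Icc a b))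
    (hWW' : ∀ x ∈ Icc a b, HasDerivWithinAt W (W' x) (Icc a b) x)
    (hW' : ContinuousOn W' (Icc a b)) :
    ∫ x in a..b, U x * W' x = U b * W b - U a * W a - ∫ x in a..b, U' x * W x := by
  rw [← uIcc_of_le hab] at hU hU' hW'
  refine integral_mul_deriv_eq_deriv_mul_of_hasDerivAt hU ?_ ?_ ?_ hU'.intervalIntegrable
    hW'.intervalIntegrable
  · rw [uIcc_of_le hab]
    exact fun x hx ↦ (hWW' x hx).continuousWithinAt
  · rwa [min_eq_left hab, max_eq_right hab]
  · rw [min_eq_left hab, max_eq_right hab]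
    exact fun x hx ↦ (hWW' x (Ioo_subset_Icc_self hx)).hasDerivAt (Icc_mem_nhds hx.1 hx.2)

theorem penalizedEnergyVariation_eq_zero {a p b α c β ga gb : ℝ} {f u uL' uR' w wL' wR' : ℝ → ℝ}
    (hap : a ≤ p) (hpb : p ≤ b) (hf : ContinuousOn f (Icc a b))
    (hu : MemAdmissible a p b u uL' uR')
    (hodeL : ∀ x ∈ Ioo a p, HasDerivAt uL' (f x + α * u x) x)
    (hodeR : ∀ x ∈ Ioo p b, HasDerivAt uR' (f x + α * u x) x)
    (hjump : uR' p - uL' p = c) (hRobin_a : -uL' a + 2 * β * (u a - ga) = 0)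
    (hRobin_b : uR' b + 2 * β * (u b - gb) = 0) (hw : MemAdmissible a p b w wL' wR') :
    penalizedEnergyVariation a p b α c β ga gb f u uL' uR' w wL' wR' = 0 := by
  have hab := hap.trans hpb
  have hg : ContinuousOn (fun x ↦ f x + α * u x) (Icc a b) := hf.add (continuousOn_const.mul hu.1)
  have hgw : ContinuousOn (fun x ↦ (f x + α * u x) * w x) (Icc a b) := hg.mul hw.1
  have hL := integral_mul_deriv_eq_deriv_mul_of_le hap hu.2.2.1 hodeL
    (hg.mono (Icc_subset_Icc le_rfl hpb)) hw.2.1 hw.2.2.1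
  have hR := integral_mul_deriv_eq_deriv_mul_of_le hpb hu.2.2.2.2 hodeR
    (hg.mono (Icc_subset_Icc hap le_rfl)) hw.2.2.2.1 hw.2.2.2.2
  have hsplit : (∫ x in a..p, (f x + α * u x) * w x) + (∫ x in p..b, (f x + α * u x) * w x)
      = ∫ x in a..b, (f x + α * u x) * w x :=
    integral_add_adjacent_intervals
      ((hgw.mono (Icc_subset_Icc le_rfl hpb)).intervalIntegrable_of_Icc hap)
      ((hgw.mono (Icc_subset_Icc hap le_rfl)).intervalIntegrable_of_Icc hpb)
  have hsource : ∫ x in a..b, (f x + α * u x) * w x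
      = (∫ x in a..b, f x * w x) + α * ∫ x in a..b, u x * w x := by
    have hfw : IntervalIntegrable (fun x ↦ f x * w x) volume a b :=
      (hf.mul hw.1).intervalIntegrable_of_Icc hab
    have huw : IntervalIntegrable (fun x ↦ α * (u x * w x)) volume a b :=
      ((hu.1.mul hw.1).intervalIntegrable_of_Icc hab).const_mul α
    rw [← intervalIntegral.integral_const_mul, ← integral_add hfw huw]
    exact integral_congr fun x _ ↦ by ring
  simp only [penalizedEnergyVariation]
  linear_combination hL + hR - hsplit - hsource - w p * hjump + w a * hRobin_a
    + w b * hRobin_b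

theorem hasDerivAt_of_exists_sub_eq_s6 {F : ℝ → ℝ} {x s t : ℝ}
    (h : ∃ d, HasDerivAt F d x ∧ d - s = t) : HasDerivAt F (t + s) x := by
  obtain ⟨d, hd, rfl⟩ := h
  simpa using hd

/-- Global minimality: if `u` solves the interface problem
`u'' − α·u = f` on `(a,p) ∪ (p,b)` with derivative jump `c` at `p` and the Robin boundary
conditions `−u'(a) + 2β(u(a) − g_a) = 0`, `u'(b) + 2β(u(b) − g_b) = 0`, then `u` is a
global minimizer of the penalized energy `L̃` over the admissible class `A`. -/
theorem penalized_energy_global_minimizer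
    (a p b : ℝ) (hap : a < p) (hpb : p < b)
    (α c β ga gb : ℝ) (hα : 0 ≤ α) (hβ : 0 < β)
    (f : ℝ → ℝ) (hf : ContinuousOn f (Icc a b))
    (u uL' uR' : ℝ → ℝ) (huA : MemAdmissible a p b u uL' uR')
    (hodeL : ∀ x ∈ Ioo a p, ∃ u'' : ℝ, HasDerivAt uL' u'' x ∧ u'' - α * u x = f x)
    (hodeR : ∀ x ∈ Ioo p b, ∃ u'' : ℝ, HasDerivAt uR' u'' x ∧ u'' - α * u x = f x)
    (hjump : uR' p - uL' p = c)
    (hRobin_a : -uL' a + 2 * β * (u a - ga) = 0)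
    (hRobin_b : uR' b + 2 * β * (u b - gb) = 0) :
    ∀ v vL' vR' : ℝ → ℝ, MemAdmissible a p b v vL' vR' →
      penalizedEnergy a p b α c β ga gb f u uL' uR'
        ≤ penalizedEnergy a p b α c β ga gb f v vL' vR' := by
  intro v vL' vR' hv
  have hu''L : ∀ x ∈ Ioo a p, HasDerivAt uL' (f x + α * u x) x :=
    fun x hx ↦ hasDerivAt_of_exists_sub_eq_s6 (hodeL x hx)
  have hu''R : ∀ x ∈ Ioo p b, HasDerivAt uR' (f x + α * u x) x :=
    fun x hx ↦ hasDerivAt_of_exists_sub_eq_s6 (hodeR x hx)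
  rw [← sub_nonneg, penalizedEnergy_sub_eq hap.le hpb.le hf huA hv,
    penalizedEnergyVariation_eq_zero hap.le hpb.le hf huA hu''L hu''R hjump hRobin_a hRobin_b
      (hv.sub huA), zero_add]
  exact penalizedEnergy_zero_data_nonneg hap.le hpb.le hα hβ.le
end

section
/- Fix real numbers a < p < b, constants α ≥ 0, c ∈ ℝ, β > 0, boundary data g_a, g_b ∈ ℝ, and a continuous f : [a,b] → ℝ. Let A be the set of continuous functions v : [a,b] → ℝ that are continuously differentiable on [a,p] and on [p,b], and define the penalized energy L̃(v) = (1/2)·∫ₐᵇ v'(x)² dx + (α/2)·∫ₐᵇ v(x)² dx + ∫ₐᵇ f(x)·v(x) dx + c·v(p) + β·[(v(a) − g_a)² + (v(b) − g_b)²], where v' denotes the piecewise derivative. Suppose u ∈ A is twice differentiable on (a,p) ∪ (p,b) with u'' − α·u = f there, satisfies u'(p⁺) − u'(p⁻) = c, and the Robin boundary conditions −u'(a) + 2β·(u(a) − g_a) = 0 and u'(b) + 2β·(u(b) − g_b) = 0. If v ∈ A satisfies L̃(v) = L̃(u), then v = u on [a,b]; in particular u is the unique global minimizer of L̃ over A.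 -/
/-!
Put `w = v - u`. Expanding the squares, `L̃(v) - L̃(u)` is the first variation of `L̃` at `u` in
the direction `w` plus `∫ (½ w'² + (α/2) w²) + β (w(a)² + w(b)²)`. Integrating by parts on `[a,p]`
and `[p,b]` with `u'' = f + α u`, the first variation reduces to point terms at `a`, `p`, `b`,
which cancel by the jump and Robin conditions. Hence if `L̃(v) = L̃(u)`, all three nonnegative
terms vanish: `w' = 0` on each piece by continuity, and `w(a) = 0` since `β > 0`, so `w = 0`.
-/

open Set intervalIntegral

noncomputable def energyDensity (α : ℝ) (v v' : ℝ → ℝ) (x : ℝ) : ℝ :=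
  1 / 2 * v' x ^ 2 + α / 2 * v x ^ 2

section Interval

variable {a b α : ℝ} {f g u u' v v' : ℝ → ℝ}

theorem energyDensity_nonneg (hα : 0 ≤ α) (x : ℝ) : 0 ≤ energyDensity α v v' x := by
  unfold energyDensity
  positivity

@[fun_prop]
theorem ContinuousOn.energyDensity {s : Set ℝ} (hv : ContinuousOn v s) (hv' : ContinuousOn v' s) :
    ContinuousOn (energyDensity α v v') s := by
  unfold _root_.energyDensity
  fun_prop

theorem eqOn_zero_of_nonneg_of_integral_eq_zero (hab : a < b) (hg : ContinuousOn g (Icc a b))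
    (hg0 : ∀ x ∈ Icc a b, 0 ≤ g x) (h : ∫ x in a..b, g x = 0) : EqOn g 0 (Icc a b) := by
  intro c hc
  by_contra hne
  have hpos := integral_lt_integral_of_continuousOn_of_le_of_exists_lt hab continuousOn_const hg
    (fun x hx => hg0 x (Ioc_subset_Icc_self hx)) ⟨c, hc, (hg0 c hc).lt_of_ne' hne⟩
  simp [h] at hpos

theorem eqOn_of_hasDerivWithinAt_of_eqOn
    (hu : ∀ x ∈ Icc a b, HasDerivWithinAt u (u' x) (Icc a b) x)
    (hv : ∀ x ∈ Icc a b, HasDerivWithinAt v (v' x) (Icc a b) x) (hderiv : EqOn v' u' (Icc a b))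
    (ha : v a = u a) : EqOn v u (Icc a b) :=
  eq_of_has_deriv_right_eq
    (fun x hx => hderiv (Ico_subset_Icc_self hx) ▸
      (hv x (Ico_subset_Icc_self hx)).mono_of_mem_nhdsWithin (Icc_mem_nhdsGE_of_mem hx))
    (fun x hx =>
      (hu x (Ico_subset_Icc_self hx)).mono_of_mem_nhdsWithin (Icc_mem_nhdsGE_of_mem hx))
    (HasDerivWithinAt.continuousOn hv) (HasDerivWithinAt.continuousOn hu) ha

theorem integral_energyDensity_add_mul (hab : a ≤ b) (hf : ContinuousOn f (Icc a b))
    (hv : ContinuousOn v (Icc a b)) (hv' : ContinuousOn v' (Icc a b)) :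
    ∫ x in a..b, energyDensity α v v' x + f x * v x
      = 1 / 2 * (∫ x in a..b, v' x ^ 2) + α / 2 * (∫ x in a..b, v x ^ 2)
        + ∫ x in a..b, f x * v x := by
  simp only [energyDensity]
  rw [integral_add, integral_add, integral_const_mul, integral_const_mul]
  all_goals exact ContinuousOn.intervalIntegrable_of_Icc hab (by fun_prop)

theorem integral_energyDensity_add_mul_sub (hab : a ≤ b) (hf : ContinuousOn f (Icc a b))
    (hu : ∀ x ∈ Icc a b, HasDerivWithinAt u (u' x) (Icc a b) x) (hu' : ContinuousOn u' (Icc a b))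
    (hv : ∀ x ∈ Icc a b, HasDerivWithinAt v (v' x) (Icc a b) x) (hv' : ContinuousOn v' (Icc a b))
    (hode : ∀ x ∈ Ioo a b, ∃ u'' : ℝ, HasDerivAt u' u'' x ∧ u'' - α * u x = f x) :
    (∫ x in a..b, energyDensity α v v' x + f x * v x)
        - ∫ x in a..b, energyDensity α u u' x + f x * u x
      = (∫ x in a..b, energyDensity α (v - u) (v' - u') x)
        + (u' b * (v b - u b) - u' a * (v a - u a)) := by
  have huc := HasDerivWithinAt.continuousOn hu
  have hvc := HasDerivWithinAt.continuousOn hv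
  have hintegrable : ∀ {g : ℝ → ℝ}, ContinuousOn g (Icc a b) →
      IntervalIntegrable g MeasureTheory.volume a b :=
    ContinuousOn.intervalIntegrable_of_Icc hab
  -- the first variation of the energy at `u`, integrated by parts using `u'' = f + α u`
  have hibp : ∫ x in a..b, (f x + α * u x) * (v x - u x) + u' x * (v' x - u' x)
      = u' b * (v b - u b) - u' a * (v a - u a) := by
    refine integral_deriv_mul_eq_sub_of_hasDerivAt (by rwa [uIcc_of_le hab])
      (by rw [uIcc_of_le hab]; fun_prop) (fun x hx => ?_) (fun x hx => ?_)
      (hintegrable (by fun_prop)) (hintegrable (by fun_prop))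
    all_goals rw [min_eq_left hab, max_eq_right hab] at hx
    · obtain ⟨u'', hu'', hode_x⟩ := hode x hx
      rwa [← hode_x, sub_add_cancel]
    · have hx_nhds := Icc_mem_nhds hx.1 hx.2
      exact ((hv x (Ioo_subset_Icc_self hx)).hasDerivAt hx_nhds).sub
        ((hu x (Ioo_subset_Icc_self hx)).hasDerivAt hx_nhds)
  calc (∫ x in a..b, energyDensity α v v' x + f x * v x)
        - ∫ x in a..b, energyDensity α u u' x + f x * u x
      = ∫ x in a..b,
          (energyDensity α v v' x + f x * v x) - (energyDensity α u u' x + f x * u x) :=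
        (integral_sub (hintegrable (by fun_prop)) (hintegrable (by fun_prop))).symm
    _ = ∫ x in a..b, energyDensity α (v - u) (v' - u') x
          + ((f x + α * u x) * (v x - u x) + u' x * (v' x - u' x)) :=
        integral_congr fun x _ => by simp only [energyDensity, Pi.sub_apply]; ring
    _ = _ := by rw [integral_add (hintegrable (by fun_prop)) (hintegrable (by fun_prop)), hibp]

theorem eqOn_of_integral_energyDensity_sub_eq_zero (hab : a < b) (hα : 0 ≤ α)
    (hu : ∀ x ∈ Icc a b, HasDerivWithinAt u (u' x) (Icc a b) x) (hu' : ContinuousOn u' (Icc a b))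
    (hv : ∀ x ∈ Icc a b, HasDerivWithinAt v (v' x) (Icc a b) x) (hv' : ContinuousOn v' (Icc a b))
    (h0 : ∫ x in a..b, energyDensity α (v - u) (v' - u') x = 0) (ha : v a = u a) :
    EqOn v u (Icc a b) := by
  have hzero := eqOn_zero_of_nonneg_of_integral_eq_zero hab
    (((HasDerivWithinAt.continuousOn hv).sub (HasDerivWithinAt.continuousOn hu)).energyDensity
      (hv'.sub hu')) (fun x _ => energyDensity_nonneg hα x) h0
  refine eqOn_of_hasDerivWithinAt_of_eqOn hu hv (fun x hx => ?_) ha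
  have hx0 : 1 / 2 * (v' x - u' x) ^ 2 + α / 2 * (v x - u x) ^ 2 = 0 := hzero hx
  have hsq : (v' x - u' x) ^ 2 = 0 := by
    linarith [sq_nonneg (v' x - u' x), mul_nonneg hα (sq_nonneg (v x - u x))]
  exact sub_eq_zero.1 (pow_eq_zero_iff two_ne_zero |>.1 hsq)

end Interval

section PenalizedEnergy

variable {a p b α c β ga gb : ℝ} {f u uL' uR' v vL' vR' : ℝ → ℝ}

theorem penalizedEnergy_eq_integral_energyDensity (hap : a ≤ p) (hpb : p ≤ b)
    (hf : ContinuousOn f (Icc a b)) (hv : MemAdmissible a p b v vL' vR') :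
    penalizedEnergy a p b α c β ga gb f v vL' vR'
      = (∫ x in a..p, energyDensity α v vL' x + f x * v x)
        + (∫ x in p..b, energyDensity α v vR' x + f x * v x)
        + c * v p + β * ((v a - ga) ^ 2 + (v b - gb) ^ 2) := by
  obtain ⟨hvc, -, hvL', -, hvR'⟩ := hv
  have hsubL : Icc a p ⊆ Icc a b := Icc_subset_Icc le_rfl hpb
  have hsubR : Icc p b ⊆ Icc a b := Icc_subset_Icc hap le_rfl
  have hsplit : ∀ {g : ℝ → ℝ}, ContinuousOn g (Icc a b) →
      (∫ x in a..p, g x) + (∫ x in p..b, g x) = ∫ x in a..b, g x := fun hg =>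
    integral_add_adjacent_intervals ((hg.mono hsubL).intervalIntegrable_of_Icc hap)
      ((hg.mono hsubR).intervalIntegrable_of_Icc hpb)
  rw [penalizedEnergy, integral_energyDensity_add_mul hap (hf.mono hsubL) (hvc.mono hsubL) hvL',
    integral_energyDensity_add_mul hpb (hf.mono hsubR) (hvc.mono hsubR) hvR',
    ← hsplit (g := fun x => v x ^ 2) (by fun_prop),
    ← hsplit (g := fun x => f x * v x) (by fun_prop)]
  ring

theorem penalizedEnergy_sub_penalizedEnergy (hap : a < p) (hpb : p < b)
    (hf : ContinuousOn f (Icc a b)) (hu : MemAdmissible a p b u uL' uR')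
    (hv : MemAdmissible a p b v vL' vR')
    (hodeL : ∀ x ∈ Ioo a p, ∃ u'' : ℝ, HasDerivAt uL' u'' x ∧ u'' - α * u x = f x)
    (hodeR : ∀ x ∈ Ioo p b, ∃ u'' : ℝ, HasDerivAt uR' u'' x ∧ u'' - α * u x = f x)
    (hjump : uR' p - uL' p = c)
    (hRobin_a : -uL' a + 2 * β * (u a - ga) = 0)
    (hRobin_b : uR' b + 2 * β * (u b - gb) = 0) :
    penalizedEnergy a p b α c β ga gb f v vL' vR' - penalizedEnergy a p b α c β ga gb f u uL' uR'
      = (∫ x in a..p, energyDensity α (v - u) (vL' - uL') x)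
        + (∫ x in p..b, energyDensity α (v - u) (vR' - uR') x)
        + β * ((v a - u a) ^ 2 + (v b - u b) ^ 2) := by
  rw [penalizedEnergy_eq_integral_energyDensity hap.le hpb.le hf hv,
    penalizedEnergy_eq_integral_energyDensity hap.le hpb.le hf hu]
  obtain ⟨-, huL, huL', huR, huR'⟩ := hu
  obtain ⟨-, hvL, hvL', hvR, hvR'⟩ := hv
  have hsubL : Icc a p ⊆ Icc a b := Icc_subset_Icc le_rfl hpb.le
  have hsubR : Icc p b ⊆ Icc a b := Icc_subset_Icc hap.le le_rfl
  have hexcessL := integral_energyDensity_add_mul_sub hap.le (hf.mono hsubL) huL huL' hvL hvL' hodeL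
  have hexcessR := integral_energyDensity_add_mul_sub hpb.le (hf.mono hsubR) huR huR' hvR hvR' hodeR
  -- the jump condition cancels the load `c` at `p`, the Robin conditions the terms at `a` and `b`
  linear_combination hexcessL + hexcessR - (v p - u p) * hjump
    + (v a - u a) * hRobin_a + (v b - u b) * hRobin_b

end PenalizedEnergy

/-- Uniqueness of the global minimizer: under the hypotheses of the
decomposition theorem, any admissible `v` whose penalized energy equals that of `u` must
coincide with `u` on `[a,b]`; in particular `u` is the unique global minimizer of `L̃`
over `A`. -/
theorem penalized_energy_minimizer_unique
    (a p b : ℝ) (hap : a < p) (hpb : p < b)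
    (α c β ga gb : ℝ) (hα : 0 ≤ α) (hβ : 0 < β)
    (f : ℝ → ℝ) (hf : ContinuousOn f (Icc a b))
    (u uL' uR' : ℝ → ℝ) (huA : MemAdmissible a p b u uL' uR')
    (hodeL : ∀ x ∈ Ioo a p, ∃ u'' : ℝ, HasDerivAt uL' u'' x ∧ u'' - α * u x = f x)
    (hodeR : ∀ x ∈ Ioo p b, ∃ u'' : ℝ, HasDerivAt uR' u'' x ∧ u'' - α * u x = f x)
    (hjump : uR' p - uL' p = c)
    (hRobin_a : -uL' a + 2 * β * (u a - ga) = 0)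
    (hRobin_b : uR' b + 2 * β * (u b - gb) = 0) :
    ∀ v vL' vR' : ℝ → ℝ, MemAdmissible a p b v vL' vR' →
      penalizedEnergy a p b α c β ga gb f v vL' vR'
        = penalizedEnergy a p b α c β ga gb f u uL' uR' →
      ∀ x ∈ Icc a b, v x = u x := by
  intro v vL' vR' hvA hE
  have hexcess := penalizedEnergy_sub_penalizedEnergy hap hpb hf huA hvA hodeL hodeR hjump
    hRobin_a hRobin_b
  rw [hE, sub_self] at hexcess
  have hL : 0 ≤ ∫ x in a..p, energyDensity α (v - u) (vL' - uL') x :=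
    integral_nonneg hap.le fun x _ => energyDensity_nonneg hα x
  have hR : 0 ≤ ∫ x in p..b, energyDensity α (v - u) (vR' - uR') x :=
    integral_nonneg hpb.le fun x _ => energyDensity_nonneg hα x
  have hβa := mul_nonneg hβ.le (sq_nonneg (v a - u a))
  have hβb := mul_nonneg hβ.le (sq_nonneg (v b - u b))
  have hva : v a = u a := by
    have : β * (v a - u a) ^ 2 = 0 := by linarith
    simpa [hβ.ne', sub_eq_zero] using this
  obtain ⟨-, huL, huL', huR, huR'⟩ := huA
  obtain ⟨-, hvL, hvL', hvR, hvR'⟩ := hvA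
  have hleft := eqOn_of_integral_energyDensity_sub_eq_zero hap hα huL huL' hvL hvL'
    (by linarith) hva
  have hright := eqOn_of_integral_energyDensity_sub_eq_zero hpb hα huR huR' hvR hvR'
    (by linarith) (hleft ⟨hap.le, le_rfl⟩)
  intro x hx
  rcases le_total x p with hxp | hpx
  exacts [hleft ⟨hx.1, hxp⟩, hright ⟨hpx, hx.2⟩]
end
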